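/- Direct qualitative attribution influence (support case): if argument B directly supports topic argument A in an acyclic QBAF under DF-QuAD semantics, then the argument attribution explanation ∇|_{B→A} ≥ 0. -/

import Mathlib

open scoped BigOperators
attribute [local instance] Classical.propDecidable

/-- The DF-QuAD combination function: given base score `t`, aggregated attacker
strength `va` and aggregated supporter strength `vs`, return the strength. -/
noncomputable def dfquad (t va vs : ℝ) : ℝ :=
  if vs ≤ va then t - t * (va - vs) else t + (1 - t) * (vs - va)

/-- A (finite, acyclic) quantitative bipolar argumentation framework. -/
structure QBAF (V : Type) [Fintype V] where
  att : V → V → Prop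
  sup : V → V → Prop
  disjoint : ∀ x y, ¬ (att x y ∧ sup x y)
  acyclic : WellFounded (fun x y => att x y ∨ sup x y)

namespace QBAF

variable {V : Type} [Fintype V]

/-- Aggregated attacker strength `v_Aa = 1 - ∏ (1 - σ X)` over attackers `X` of `A`. -/
noncomputable def vatt (Q : QBAF V) (σ : V → ℝ) (A : V) : ℝ :=
  1 - ∏ x ∈ Finset.univ.filter (fun x => Q.att x A), (1 - σ x)

/-- Aggregated supporter strength `v_As = 1 - ∏ (1 - σ X)` over supporters `X` of `A`. -/
noncomputable def vsup (Q : QBAF V) (σ : V → ℝ) (A : V) : ℝ :=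
  1 - ∏ x ∈ Finset.univ.filter (fun x => Q.sup x A), (1 - σ x)

/-- `σ` is the DF-QuAD strength function for base scores `τ`. -/
def IsStrength (Q : QBAF V) (τ σ : V → ℝ) : Prop :=
  ∀ A, σ A = dfquad (τ A) (Q.vatt σ A) (Q.vsup σ A)

/-- The edge relation of the QBAF graph. -/
def edge (Q : QBAF V) (x y : V) : Prop := Q.att x y ∨ Q.sup x y

/-- `l` is a (directed) path from `B` to `A` in the QBAF graph. -/
def IsPathFrom (Q : QBAF V) (B A : V) (l : List V) : Prop :=
  2 ≤ l.length ∧ l.Chain' Q.edge ∧ l.head? = some B ∧ l.getLast? = some A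

end QBAF

/-- The argument attribution explanation (AAE) `∇|_{B ↦ A}`: the derivative of the
strength of `A` with respect to the base score of `B`, where `σf τ'` denotes the
DF-QuAD strength function for base scores `τ'`. -/
noncomputable def AAE {V : Type} [Fintype V] (Q : QBAF V)
    (σf : (V → ℝ) → V → ℝ) (τ : V → ℝ) (B A : V) : ℝ :=
  deriv (fun δ => σf (Function.update τ B δ) A) (τ B)

/-!
Changing the base score of `B` only affects the strengths of arguments reachable from `B`.
Since `(B, A)` is the only path from `B` to `A`, the attackers of `A` and its supporters other
than `B` are unaffected, so the strength of `A` depends on `τ B` through `σ B` alone.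
DF-QuAD is monotone in the base score (with slope `1 - |va - vs| ≥ 0`, even for base scores
outside `[0, 1]`) and in the aggregated support, and the aggregated support is monotone in the
strength of each supporter, so the strength of `A` is a monotone function of `τ B` on all of `ℝ`
and its derivative is nonnegative.
-/

open Set

lemma dfquad_mem_Icc {t va vs : ℝ} (ht : t ∈ Icc (0 : ℝ) 1) (hva : va ∈ Icc (0 : ℝ) 1)
    (hvs : vs ∈ Icc (0 : ℝ) 1) : dfquad t va vs ∈ Icc (0 : ℝ) 1 := by
  obtain ⟨ht0, ht1⟩ := ht
  obtain ⟨hva0, hva1⟩ := hva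
  obtain ⟨hvs0, hvs1⟩ := hvs
  unfold dfquad
  split_ifs <;> constructor <;> nlinarith

lemma monotone_dfquad_base {va vs : ℝ} (hva : va ∈ Icc (0 : ℝ) 1)
    (hvs : vs ∈ Icc (0 : ℝ) 1) : Monotone fun t => dfquad t va vs := by
  obtain ⟨hva0, hva1⟩ := hva
  obtain ⟨hvs0, hvs1⟩ := hvs
  intro t₁ t₂ ht
  simp only [dfquad]
  split_ifs
  · nlinarith [mul_nonneg (sub_nonneg.2 ht) (show (0 : ℝ) ≤ 1 - (va - vs) by linarith)]
  · nlinarith [mul_nonneg (sub_nonneg.2 ht) (show (0 : ℝ) ≤ 1 - (vs - va) by linarith)]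

lemma monotone_dfquad_support {t va : ℝ} (ht : t ∈ Icc (0 : ℝ) 1) :
    Monotone fun vs => dfquad t va vs := by
  obtain ⟨ht0, ht1⟩ := ht
  intro v₁ v₂ hv
  simp only [dfquad]
  split_ifs with h₁ h₂ h₂
  · nlinarith [mul_nonneg ht0 (sub_nonneg.2 hv)]
  · nlinarith [mul_nonneg ht0 (show (0 : ℝ) ≤ va - v₁ by linarith),
      mul_nonneg (show (0 : ℝ) ≤ 1 - t by linarith) (show (0 : ℝ) ≤ v₂ - va by linarith)]
  · exact absurd (hv.trans h₂) h₁
  · nlinarith [mul_nonneg (show (0 : ℝ) ≤ 1 - t by linarith) (sub_nonneg.2 hv)]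

lemma one_sub_prod_one_sub_mem_Icc {ι : Type*} {s : Finset ι} {f : ι → ℝ}
    (hf : ∀ x ∈ s, f x ∈ Icc (0 : ℝ) 1) : 1 - ∏ x ∈ s, (1 - f x) ∈ Icc (0 : ℝ) 1 := by
  have h0 : 0 ≤ ∏ x ∈ s, (1 - f x) :=
    Finset.prod_nonneg fun x hx => sub_nonneg.2 (hf x hx).2
  have h1 : ∏ x ∈ s, (1 - f x) ≤ 1 :=
    Finset.prod_le_one (fun x hx => sub_nonneg.2 (hf x hx).2)
      fun x hx => sub_le_self 1 (hf x hx).1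
  constructor <;> linarith

namespace QBAF

variable {V : Type} [Fintype V] (Q : QBAF V)

lemma not_reflTransGen_of_edge {x y : V} (hxy : Q.edge x y) :
    ¬ Relation.ReflTransGen Q.edge y x := fun hyx =>
  have hcycle : Relation.TransGen Q.edge y y := Relation.TransGen.tail' hyx hxy
  Q.acyclic.transGen.asymmetric y y hcycle hcycle

lemma eq_of_edge_of_reflTransGen {A B x : V}
    (huniq : ∀ l, Q.IsPathFrom B A l → l = [B, A]) (hxA : Q.edge x A)
    (hBx : Relation.ReflTransGen Q.edge B x) : x = B := by
  obtain ⟨l, hl, hchain, hhead, hlast⟩ := List.exists_isChain_ne_nil_of_relationReflTransGen hBx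
  have hpath : Q.IsPathFrom B A (l ++ [A]) := by
    refine ⟨?_, ?_, ?_, by simp⟩
    · rw [List.length_append, List.length_singleton]
      exact Nat.succ_le_succ (List.length_pos_iff.2 hl)
    · exact hchain.append (.singleton A) fun a ha b hb => by
        rw [List.getLast?_eq_some_getLast hl, hlast, Option.mem_some_iff] at ha
        rw [List.head?_singleton, Option.mem_some_iff] at hb
        exact ha ▸ hb ▸ hxA
    · rw [List.head?_append, List.head?_eq_some_head hl, hhead]; rfl
  have hl' : l = [B] := List.append_inj_left' (huniq _ hpath) rfl
  subst hl'
  exact hlast.symm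

variable {Q}

lemma vatt_congr {σ₁ σ₂ : V → ℝ} {A : V} (h : ∀ x, Q.att x A → σ₁ x = σ₂ x) :
    Q.vatt σ₁ A = Q.vatt σ₂ A := by
  unfold vatt
  rw [Finset.prod_congr rfl fun x hx => by rw [h x (Finset.mem_filter.1 hx).2]]

lemma vsup_congr {σ₁ σ₂ : V → ℝ} {A : V} (h : ∀ x, Q.sup x A → σ₁ x = σ₂ x) :
    Q.vsup σ₁ A = Q.vsup σ₂ A := by
  unfold vsup
  rw [Finset.prod_congr rfl fun x hx => by rw [h x (Finset.mem_filter.1 hx).2]]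

lemma vatt_mem_Icc {σ : V → ℝ} (hσ : ∀ x, σ x ∈ Icc (0 : ℝ) 1) (A : V) :
    Q.vatt σ A ∈ Icc (0 : ℝ) 1 :=
  one_sub_prod_one_sub_mem_Icc fun x _ => hσ x

lemma vsup_mem_Icc {σ : V → ℝ} (hσ : ∀ x, σ x ∈ Icc (0 : ℝ) 1) (A : V) :
    Q.vsup σ A ∈ Icc (0 : ℝ) 1 :=
  one_sub_prod_one_sub_mem_Icc fun x _ => hσ x

lemma vsup_le_vsup_of_eqOn_ne {σ₁ σ₂ : V → ℝ} {A B : V} (hBA : Q.sup B A)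
    (heq : ∀ x, Q.sup x A → x ≠ B → σ₁ x = σ₂ x) (hle : ∀ x, Q.sup x A → x ≠ B → σ₁ x ≤ 1)
    (hB : σ₁ B ≤ σ₂ B) : Q.vsup σ₁ A ≤ Q.vsup σ₂ A := by
  have hmem : B ∈ Finset.univ.filter (fun x => Q.sup x A) := by simpa using hBA
  unfold vsup
  rw [← Finset.mul_prod_erase _ _ hmem, ← Finset.mul_prod_erase _ _ hmem]
  have hrest : ∀ x ∈ (Finset.univ.filter (fun x => Q.sup x A)).erase B,
      Q.sup x A ∧ x ≠ B := fun x hx =>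
    ⟨(Finset.mem_filter.1 (Finset.mem_of_mem_erase hx)).2, Finset.ne_of_mem_erase hx⟩
  rw [Finset.prod_congr rfl fun x hx => by rw [heq x (hrest x hx).1 (hrest x hx).2]]
  have hP : 0 ≤ ∏ x ∈ (Finset.univ.filter (fun x => Q.sup x A)).erase B, (1 - σ₂ x) :=
    Finset.prod_nonneg fun x hx => by
      rw [← heq x (hrest x hx).1 (hrest x hx).2]
      exact sub_nonneg.2 (hle x (hrest x hx).1 (hrest x hx).2)
  nlinarith

namespace IsStrength

variable {τ σ : V → ℝ}

lemma mem_Icc (h : Q.IsStrength τ σ) (hτ : ∀ x, τ x ∈ Icc (0 : ℝ) 1) (X : V) :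
    σ X ∈ Icc (0 : ℝ) 1 := by
  induction X using Q.acyclic.induction with
  | _ X ih =>
    rw [h X]
    exact dfquad_mem_Icc (hτ X) (one_sub_prod_one_sub_mem_Icc fun x hx =>
      ih x (.inl (Finset.mem_filter.1 hx).2)) (one_sub_prod_one_sub_mem_Icc fun x hx =>
      ih x (.inr (Finset.mem_filter.1 hx).2))

lemma eq_of_eqOn_ancestors {τ' σ' : V → ℝ} (h : Q.IsStrength τ σ) (h' : Q.IsStrength τ' σ')
    (X : V) (hτ : ∀ y, Relation.ReflTransGen Q.edge y X → τ y = τ' y) : σ X = σ' X := by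
  induction X using Q.acyclic.induction with
  | _ X ih =>
    have hparents : ∀ y, Q.edge y X → σ y = σ' y := fun y hy =>
      ih y hy fun z hz => hτ z (hz.tail hy)
    rw [h X, h' X, hτ X .refl, vatt_congr fun x hx => hparents x (.inl hx),
      vsup_congr fun x hx => hparents x (.inr hx)]

lemma apply_update_of_not_reflTransGen {σ' : V → ℝ} {B X : V} {δ : ℝ}
    (h : Q.IsStrength τ σ) (h' : Q.IsStrength (Function.update τ B δ) σ')
    (hX : ¬ Relation.ReflTransGen Q.edge B X) : σ' X = σ X :=
  (h.eq_of_eqOn_ancestors h' X fun y hy =>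
    (Function.update_of_ne (fun hyB => hX (by rwa [hyB] at hy)) δ τ).symm).symm

lemma apply_update_self {σ' : V → ℝ} {B : V} {δ : ℝ}
    (h : Q.IsStrength τ σ) (h' : Q.IsStrength (Function.update τ B δ) σ') :
    σ' B = dfquad δ (Q.vatt σ B) (Q.vsup σ B) := by
  have hparents : ∀ y, Q.edge y B → σ' y = σ y := fun y hy =>
    h.apply_update_of_not_reflTransGen h' (Q.not_reflTransGen_of_edge hy)
  rw [h' B, Function.update_self, vatt_congr fun x hx => hparents x (.inl hx),
    vsup_congr fun x hx => hparents x (.inr hx)]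

end IsStrength

end QBAF

/-- direct qualitative attribution influence, support case.
If `B` directly supports the topic argument `A` (the edge `(B,A) ∈ ℛ⁺` being the
unique path from `B` to `A`), then `∇|_{B ↦ A} ≥ 0`. -/
theorem direct_qualitative_support {V : Type} [Fintype V] (Q : QBAF V)
    (σf : (V → ℝ) → V → ℝ) (hσ : ∀ τ, Q.IsStrength τ (σf τ))
    (τ : V → ℝ) (hτ : ∀ x, τ x ∈ Set.Icc (0:ℝ) 1)
    (A B : V) (hsup : Q.sup B A)
    (huniq : ∀ l, Q.IsPathFrom B A l → l = [B, A]) :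
    0 ≤ AAE Q σf τ B A := by
  have hAB : A ≠ B := fun h => Q.not_reflTransGen_of_edge (.inr hsup) (h ▸ .refl)
  have hmem := (hσ τ).mem_Icc hτ
  have hfixed : ∀ x, Q.edge x A → x ≠ B → ∀ δ, σf (Function.update τ B δ) x = σf τ x :=
    fun x hx hxB δ => (hσ τ).apply_update_of_not_reflTransGen (hσ _)
      fun hBx => hxB (Q.eq_of_edge_of_reflTransGen huniq hx hBx)
  have hσA : ∀ δ, σf (Function.update τ B δ) A =
      dfquad (τ A) (Q.vatt (σf τ) A) (Q.vsup (σf (Function.update τ B δ)) A) := fun δ => by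
    rw [hσ _ A, Function.update_of_ne hAB, QBAF.vatt_congr fun x hx => hfixed x (.inl hx)
      (fun hxB => Q.disjoint B A ⟨hxB ▸ hx, hsup⟩) δ]
  have hvsup : Monotone fun δ => Q.vsup (σf (Function.update τ B δ)) A := fun δ₁ δ₂ hδ => by
    refine QBAF.vsup_le_vsup_of_eqOn_ne hsup (fun x hx hxB => ?_) (fun x hx hxB => ?_) ?_
    · rw [hfixed x (.inr hx) hxB, hfixed x (.inr hx) hxB]
    · rw [hfixed x (.inr hx) hxB]
      exact (hmem x).2
    · rw [(hσ τ).apply_update_self (hσ _), (hσ τ).apply_update_self (hσ _)]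
      exact monotone_dfquad_base (QBAF.vatt_mem_Icc hmem B) (QBAF.vsup_mem_Icc hmem B) hδ
  have hmono : Monotone fun δ => σf (Function.update τ B δ) A := fun δ₁ δ₂ hδ => by
    simp only [hσA]
    exact monotone_dfquad_support (hτ A) (hvsup hδ)
  exact hmono.deriv_nonneg
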